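/- Let t, n, B and a_1, …, a_n be positive integers with Σ_{1≤i≤n} a_i = tB, a_i − 1 > (t−1)n and a_i ≤ B for all i, and set k = (t−1)n + 3B. Let G be the vertex-weighted graph with vertex set {u_i : 1 ≤ i ≤ n} ∪ {v_i^j : 1 ≤ i ≤ n, 1 ≤ j ≤ t} ∪ {w_j : 1 ≤ j ≤ t} ∪ {x}, whose edges are exactly {u_i, v_i^j} and {v_i^j, w_j} for all 1 ≤ i ≤ n and 1 ≤ j ≤ t, with weights w(u_i) = a_i − 1, w(v_i^j) = 1, w(w_j) = 2B, and w(x) = 3B. Then wvi(G) ≤ k if and only if there exists a partition (I_1, …, I_t) of {1, …, n} such that Σ_{i∈I_j} a_i = B for every j ∈ {1, …, t}. -/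
import Mathlib


namespace VI

open SimpleGraph

variable {V : Type*}

/-- Total weight of a set of vertices. -/
noncomputable def setWeight (w : V → ℕ) (X : Set V) : ℕ := ∑ᶠ v ∈ X, w v

/-- Maximum weight of a connected component of `G − S`. -/
noncomputable def compMax (G : SimpleGraph V) (w : V → ℕ) (S : Set V) : ℕ :=
  sSup {n | ∃ C : (G.induce Sᶜ).ConnectedComponent, n = setWeight w (Subtype.val '' C.supp)}

/-- `w(S) + max_{C ∈ cc(G−S)} w(V(C))`. -/
noncomputable def viCost (G : SimpleGraph V) (w : V → ℕ) (S : Set V) : ℕ :=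
  setWeight w S + compMax G w S

/-- The weighted vertex integrity of `G`. -/
noncomputable def wvi (G : SimpleGraph V) (w : V → ℕ) : ℕ := ⨅ S : Set V, viCost G w S

/-- Maximum number of vertices of a connected component of `G − S`. -/
noncomputable def uCompMax (G : SimpleGraph V) (S : Set V) : ℕ :=
  sSup {n | ∃ C : (G.induce Sᶜ).ConnectedComponent, n = C.supp.ncard}

/-- `|S| + max_{C ∈ cc(G−S)} |V(C)|`. -/
noncomputable def uViCost (G : SimpleGraph V) (S : Set V) : ℕ := S.ncard + uCompMax G S

/-- The (unweighted) vertex integrity of `G`. -/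
noncomputable def uvi (G : SimpleGraph V) : ℕ := ⨅ S : Set V, uViCost G S

/-- A vertex `v` is redundant w.r.t. `S` if at most one connected component of `G − S`
contains a neighbor of `v`. -/
def Redundant (G : SimpleGraph V) (S : Set V) (v : V) : Prop :=
  {C : (G.induce Sᶜ).ConnectedComponent | ∃ u : (Sᶜ : Set V), G.Adj v ↑u ∧ u ∈ C.supp}.Subsingleton

/-- `S` is irredundant if it contains no redundant vertex. -/
def Irredundant (G : SimpleGraph V) (S : Set V) : Prop := ∀ v ∈ S, ¬ Redundant G S v

end VI

namespace VI

/-- Vertices `u_i`, `v_i^j`, `w_j`, `x` of the bin-packing reduction. -/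
def BPVertex (n t : ℕ) : Type :=
  Fin n ⊕ (Fin n × Fin t) ⊕ Fin t ⊕ Unit

/-- Edges `{u_i, v_i^j}` and `{v_i^j, w_j}` for all `i`, `j`. -/
def bpRel (n t : ℕ) : BPVertex n t → BPVertex n t → Prop
  | .inl i, .inr (.inl (i', _)) => i = i'
  | .inr (.inl (_, j)), .inr (.inr (.inl j')) => j = j'
  | _, _ => False

/-- The graph of the reduction from Unary Bin Packing. -/
def bpGraph (n t : ℕ) : SimpleGraph (BPVertex n t) := SimpleGraph.fromRel (bpRel n t)

/-- Weights `w(u_i) = a_i − 1`, `w(v_i^j) = 1`, `w(w_j) = 2B`, `w(x) = 3B`. -/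
def bpWeight (n t B : ℕ) (a : Fin n → ℕ) : BPVertex n t → ℕ
  | .inl i => a i - 1
  | .inr (.inl _) => 1
  | .inr (.inr (.inl _)) => 2 * B
  | .inr (.inr (.inr _)) => 3 * B

end VI

namespace VI
open SimpleGraph

section GeneralLemmas
variable {V : Type*} [Finite V] (G : SimpleGraph V) (w : V → ℕ)

lemma setWeight_mono {X Y : Set V} (h : X ⊆ Y) : setWeight w X ≤ setWeight w Y := by
  rw [setWeight, setWeight, finsum_mem_eq_finite_toFinset_sum _ (Set.toFinite X),
    finsum_mem_eq_finite_toFinset_sum _ (Set.toFinite Y)]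
  exact Finset.sum_le_sum_of_subset (by simpa using h)

omit [Finite V] in
lemma compMax_le {S : Set V} {m : ℕ}
    (h : ∀ C : (G.induce Sᶜ).ConnectedComponent, setWeight w (Subtype.val '' C.supp) ≤ m) :
    compMax G w S ≤ m := by
  apply csSup_le'
  rintro x ⟨C, rfl⟩
  exact h C

lemma le_compMax {S : Set V} (C : (G.induce Sᶜ).ConnectedComponent) :
    setWeight w (Subtype.val '' C.supp) ≤ compMax G w S := by
  apply le_csSup
  · have : {n | ∃ C : (G.induce Sᶜ).ConnectedComponent, n = setWeight w (Subtype.val '' C.supp)}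
        = Set.range (fun C : (G.induce Sᶜ).ConnectedComponent =>
            setWeight w (Subtype.val '' C.supp)) := by
      ext x; simp [eq_comm]
    rw [this]
    exact (Set.finite_range _).bddAbove
  · exact ⟨C, rfl⟩

lemma weight_le_compMax {S A : Set V} {v : V} (hv : v ∈ Sᶜ)
    (hA : ∀ a ∈ A, ∃ ha' : a ∈ Sᶜ, (G.induce Sᶜ).Reachable ⟨v, hv⟩ ⟨a, ha'⟩) :
    setWeight w A ≤ compMax G w S := by
  refine le_trans (setWeight_mono w ?_)
    (le_compMax G w ((G.induce Sᶜ).connectedComponentMk ⟨v, hv⟩))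
  intro x hx
  obtain ⟨hx', hr⟩ := hA x hx
  exact ⟨⟨x, hx'⟩, by simp [ConnectedComponent.mem_supp_iff, ConnectedComponent.eq, hr.symm], rfl⟩

omit [Finite V] in
lemma exists_wvi_set : ∃ S : Set V, viCost G w S = wvi G w := by
  have h : wvi G w ∈ Set.range (viCost G w) := by
    rw [wvi, iInf]
    exact Nat.sInf_mem (Set.range_nonempty _)
  obtain ⟨S, hS⟩ := h
  exact ⟨S, hS⟩

omit [Finite V] in
lemma wvi_le (S : Set V) : wvi G w ≤ viCost G w S := ciInf_le (OrderBot.bddBelow _) S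

omit [Finite V] in
lemma reachable_label {α : Type*} {G : SimpleGraph V} (L : V → α)
    (h : ∀ a b, G.Adj a b → L a = L b) {u v : V} (hr : G.Reachable u v) : L u = L v := by
  obtain ⟨p⟩ := hr
  induction p with
  | nil => rfl
  | cons h' _ ih => exact (h _ _ h').trans ih

omit [Finite V] in
lemma induce_adj' {G : SimpleGraph V} {S : Set V} {x y : V} (hx : x ∈ S) (hy : y ∈ S)
    (h : G.Adj x y) : (G.induce S).Adj ⟨x, hx⟩ ⟨y, hy⟩ := h

end GeneralLemmas

section BP
variable {n t B : ℕ} {a : Fin n → ℕ}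

instance : Fintype (BPVertex n t) := by unfold BPVertex; infer_instance
instance : DecidableEq (BPVertex n t) := by unfold BPVertex; infer_instance

def Uv (i : Fin n) : BPVertex n t := Sum.inl i
def Vvx (i : Fin n) (j : Fin t) : BPVertex n t := Sum.inr (Sum.inl (i, j))
def Wv (j : Fin t) : BPVertex n t := Sum.inr (Sum.inr (Sum.inl j))
def Xv : BPVertex n t := Sum.inr (Sum.inr (Sum.inr ()))

lemma adj_uv (i : Fin n) (j : Fin t) : (bpGraph n t).Adj (Uv i) (Vvx i j) := by
  rw [bpGraph, SimpleGraph.fromRel_adj]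
  exact ⟨by simp [BPVertex, Uv, Vvx], Or.inl rfl⟩

lemma adj_vw (i : Fin n) (j : Fin t) : (bpGraph n t).Adj (Vvx i j) (Wv j) := by
  rw [bpGraph, SimpleGraph.fromRel_adj]
  exact ⟨by simp [BPVertex, Wv, Vvx], Or.inl rfl⟩

lemma bp_adj_cases {x y : BPVertex n t} (h : (bpGraph n t).Adj x y) :
    (∃ i j, x = Uv i ∧ y = Vvx i j) ∨ (∃ i j, x = Vvx i j ∧ y = Uv i) ∨
    (∃ i j, x = Vvx i j ∧ y = Wv j) ∨ (∃ i j, x = Wv j ∧ y = Vvx i j) := by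
  rw [bpGraph, SimpleGraph.fromRel_adj] at h
  obtain ⟨-, h | h⟩ := h <;>
  · rcases x with i | ⟨i,j⟩ | j | u <;> rcases y with i' | ⟨i',j'⟩ | j' | u' <;>
      simp_all [BPVertex, bpRel, Uv, Vvx, Wv, Xv] <;> aesop

def rowSet (R : Fin n → Finset (Fin t)) : Set (BPVertex n t) :=
  ⋃ i, (fun j => Vvx i j) '' ((R i : Finset (Fin t)) : Set (Fin t))

lemma mem_rowSet {R : Fin n → Finset (Fin t)} {z : BPVertex n t} :
    z ∈ rowSet R ↔ ∃ i, ∃ j ∈ R i, z = Vvx i j := by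
  simp [rowSet, eq_comm]

lemma setWeight_rowSet (R : Fin n → Finset (Fin t)) :
    setWeight (bpWeight n t B a) (rowSet R) = ∑ i, (R i).card := by
  have hdisj : Pairwise (Function.onFun Disjoint
      (fun i => (fun j => Vvx i j) '' ((R i : Finset (Fin t)) : Set (Fin t)))) := by
    intro i i' hii
    simp only [Function.onFun, Set.disjoint_left]
    rintro z ⟨j, _, rfl⟩ ⟨j', _, hz⟩
    apply hii
    simp only [Vvx, BPVertex, Sum.inr.injEq, Sum.inl.injEq, Prod.mk.injEq] at hz
    exact hz.1.symm
  rw [setWeight, rowSet, finsum_mem_iUnion hdisj (fun i => Set.toFinite _),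
    finsum_eq_sum_of_fintype]
  congr 1
  ext i
  have hinj : Set.InjOn (fun j => Vvx i j) ((R i : Finset (Fin t)) : Set (Fin t)) := by
    intro x _ y _ h
    simp only [Vvx, BPVertex, Sum.inr.injEq, Sum.inl.injEq, Prod.mk.injEq] at h
    exact h.2
  rw [finsum_mem_image hinj, finsum_mem_coe_finset]
  simp [bpWeight, Vvx]

def Cset (f : Fin n → Fin t) (j : Fin t) : Set (BPVertex n t) :=
  ({Wv j} : Set _) ∪ (fun i => Vvx i (f i)) '' {i | f i = j} ∪ Uv '' {i | f i = j}

lemma setWeight_Cset (ha : ∀ i, 0 < a i) (f : Fin n → Fin t) (j : Fin t) :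
    setWeight (bpWeight n t B a) (Cset f j)
      = 2 * B + ∑ i ∈ Finset.univ.filter (fun i => f i = j), a i := by
  have hst1 : Disjoint ({Wv j} : Set (BPVertex n t)) ((fun i => Vvx i (f i)) '' {i | f i = j}) := by
    simp only [Set.disjoint_left, Set.mem_singleton_iff]
    rintro z rfl ⟨i, _, hz⟩
    simp [Vvx, Wv, BPVertex] at hz
  have hst2 : Disjoint (({Wv j} : Set (BPVertex n t)) ∪ (fun i => Vvx i (f i)) '' {i | f i = j})
      (Uv '' {i | f i = j}) := by
    simp only [Set.disjoint_left, Set.mem_union, Set.mem_singleton_iff]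
    rintro z (rfl | ⟨i, _, rfl⟩) ⟨i', _, hz⟩
    · simp [Uv, Wv, BPVertex] at hz
    · simp [Uv, Vvx, BPVertex] at hz
  have hinjV : Set.InjOn (fun i => Vvx i (f i)) {i | f i = j} := by
    intro x _ y _ h
    simp only [Vvx, BPVertex, Sum.inr.injEq, Sum.inl.injEq, Prod.mk.injEq] at h
    exact h.1
  have hinjU : Set.InjOn (Uv (t := t)) {i | f i = j} := by
    intro x _ y _ h
    simpa only [Uv, BPVertex, Sum.inl.injEq] using h
  have hset : {i | f i = j} = ↑(Finset.univ.filter (fun i => f i = j)) := by ext; simp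
  rw [setWeight, Cset, finsum_mem_union hst2 (Set.toFinite _) (Set.toFinite _),
    finsum_mem_union hst1 (Set.toFinite _) (Set.toFinite _), finsum_mem_singleton,
    finsum_mem_image hinjV, finsum_mem_image hinjU, hset, finsum_mem_coe_finset,
    finsum_mem_coe_finset]
  have h0 : bpWeight n t B a (Wv j) = 2 * B := rfl
  have h1 : ∀ i : Fin n, bpWeight n t B a (Vvx i (f i)) = 1 := fun _ => rfl
  have h2 : ∀ i : Fin n, bpWeight n t B a (Uv i) = a i - 1 := fun _ => rfl
  simp only [h0, h1, h2]
  rw [add_assoc, ← Finset.sum_add_distrib]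
  congr 1
  exact Finset.sum_congr rfl fun i _ => by have := ha i; omega

def bpLabel (f : Fin n → Fin t) : BPVertex n t → Option (Fin t)
  | .inl i => some (f i)
  | .inr (.inl (_, j)) => some j
  | .inr (.inr (.inl j)) => some j
  | .inr (.inr (.inr _)) => none

end BP
end VI
set_option maxHeartbeats 1000000 in
open VI SimpleGraph in
/-- `wvi(G) ≤ (t−1)n + 3B` iff `{1, …, n}` can be partitioned into `t` parts of weight `B`
each (a partition into `t` parts being encoded by a function `f : Fin n → Fin t`). -/
theorem statement12 (n t B k : ℕ) (hn : 0 < n) (ht : 0 < t) (hB : 0 < B)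
    (a : Fin n → ℕ) (ha : ∀ i, 0 < a i) (hsum : ∑ i, a i = t * B)
    (hbig : ∀ i, (t - 1) * n + 1 < a i) (hle : ∀ i, a i ≤ B)
    (hk : k = (t - 1) * n + 3 * B) :
    wvi (bpGraph n t) (bpWeight n t B a) ≤ k ↔
      ∃ f : Fin n → Fin t,
        ∀ j : Fin t, ∑ i ∈ Finset.univ.filter (fun i => f i = j), a i = B := by
  classical
  have hBn : (t - 1) * n + 1 < B := lt_of_lt_of_le (hbig ⟨0, hn⟩) (hle ⟨0, hn⟩)
  constructor
  · -- forward direction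
    intro h
    obtain ⟨S, hSeq⟩ := exists_wvi_set (bpGraph n t) (bpWeight n t B a)
    set w : BPVertex n t → ℕ := bpWeight n t B a with hw
    set G : SimpleGraph (BPVertex n t) := bpGraph n t with hG
    have hcost : setWeight w S + compMax G w S ≤ k := by
      have : viCost G w S ≤ k := by rw [hSeq]; exact h
      rwa [viCost] at this
    -- Step A : Xv ∉ S
    have hXS : Xv ∉ S := by
      intro hX
      have h3B : (3 * B : ℕ) ≤ setWeight w S := by
        have h' := setWeight_mono (V := BPVertex n t) w (Set.singleton_subset_iff.mpr hX)
        rw [setWeight, finsum_mem_singleton] at h'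
        exact h'
      by_cases hUall : ∀ i, Uv i ∈ S
      · have hne0 : (Xv : BPVertex n t) ≠ Uv ⟨0, hn⟩ := by simp [Xv, Uv, BPVertex]
        have hpair : setWeight w ({Xv, Uv ⟨0, hn⟩} : Set (BPVertex n t)) ≤ setWeight w S := by
          apply setWeight_mono
          rintro z (rfl | rfl)
          · exact hX
          · exact hUall _
        rw [setWeight, finsum_mem_pair hne0] at hpair
        have hwx : w Xv = 3 * B := rfl
        have hwu : w (Uv ⟨0, hn⟩) = a ⟨0, hn⟩ - 1 := rfl
        have hb0 := hbig ⟨0, hn⟩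
        have ha0 := ha ⟨0, hn⟩
        omega
      · push_neg at hUall
        obtain ⟨i, hUi⟩ := hUall
        have hcm : w (Uv i) ≤ compMax G w S := by
          have h' := weight_le_compMax G w (show Uv i ∈ Sᶜ from hUi)
            (A := {Uv i}) (by rintro z rfl; exact ⟨hUi, Reachable.refl _⟩)
          rwa [setWeight, finsum_mem_singleton] at h'
        have hwu : w (Uv i) = a i - 1 := rfl
        have hbi := hbig i
        have hai := ha i
        omega
    -- Step B : compMax ≥ 3B
    have hXcm : (3 * B : ℕ) ≤ compMax G w S := by
      have h' := weight_le_compMax G w (show Xv ∈ Sᶜ from hXS)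
        (A := {Xv}) (by rintro z rfl; exact ⟨hXS, Reachable.refl _⟩)
      rwa [setWeight, finsum_mem_singleton] at h'
    have hwS_le : setWeight w S ≤ (t - 1) * n := by omega
    -- Step C : no u or w vertices in S
    have hUS : ∀ i, Uv i ∉ S := by
      intro i hi
      have h' := setWeight_mono (V := BPVertex n t) w (Set.singleton_subset_iff.mpr hi)
      rw [setWeight, finsum_mem_singleton] at h'
      have hwu : w (Uv i) = a i - 1 := rfl
      have hbi := hbig i
      omega
    have hWS : ∀ j, Wv j ∉ S := by
      intro j hj
      have h' := setWeight_mono (V := BPVertex n t) w (Set.singleton_subset_iff.mpr hj)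
      rw [setWeight, finsum_mem_singleton] at h'
      have hww : w (Wv j) = 2 * B := rfl
      omega
    -- Step D : at most one missing v-vertex per row
    have hTss : ∀ (i : Fin n) (j j' : Fin t), Vvx i j ∉ S → Vvx i j' ∉ S → j = j' := by
      intro i j j' hj hj'
      by_contra hne
      have hjc : Vvx i j ∈ Sᶜ := hj
      have hjc' : Vvx i j' ∈ Sᶜ := hj'
      have hWc : ∀ j0 : Fin t, Wv j0 ∈ Sᶜ := hWS
      have hUc : Uv i ∈ Sᶜ := hUS i
      have r1 : (G.induce Sᶜ).Reachable ⟨Wv j, hWc j⟩ ⟨Vvx i j, hjc⟩ :=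
        (induce_adj' (hWc j) hjc (adj_vw i j).symm).reachable
      have r2 : (G.induce Sᶜ).Reachable ⟨Vvx i j, hjc⟩ ⟨Uv i, hUc⟩ :=
        (induce_adj' hjc hUc (adj_uv i j).symm).reachable
      have r3 : (G.induce Sᶜ).Reachable ⟨Uv i, hUc⟩ ⟨Vvx i j', hjc'⟩ :=
        (induce_adj' hUc hjc' (adj_uv i j')).reachable
      have r4 : (G.induce Sᶜ).Reachable ⟨Vvx i j', hjc'⟩ ⟨Wv j', hWc j'⟩ :=
        (induce_adj' hjc' (hWc j') (adj_vw i j')).reachable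
      have hr : (G.induce Sᶜ).Reachable ⟨Wv j, hWc j⟩ ⟨Wv j', hWc j'⟩ :=
        r1.trans (r2.trans (r3.trans r4))
      have hwne : (Wv j : BPVertex n t) ≠ Wv j' := by
        intro hcon
        exact hne (by simpa [Wv, BPVertex] using hcon)
      have hpairle : setWeight w ({Wv j, Wv j'} : Set (BPVertex n t)) ≤ compMax G w S := by
        apply weight_le_compMax G w (show Wv j ∈ Sᶜ from hWS j)
        rintro z (rfl | rfl)
        · exact ⟨hWS j, Reachable.refl _⟩
        · exact ⟨hWS j', hr⟩
      rw [setWeight, finsum_mem_pair hwne] at hpairle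
      have hw1 : w (Wv j) = 2 * B := rfl
      have hw2 : w (Wv j') = 2 * B := rfl
      omega
    -- Step E : rows
    set R : Fin n → Finset (Fin t) := fun i => Finset.univ.filter (fun j => Vvx i j ∈ S) with hR
    have hrowsub : rowSet R ⊆ S := by
      intro z hz
      rw [mem_rowSet] at hz
      obtain ⟨i, j, hj, rfl⟩ := hz
      rw [hR] at hj
      exact (Finset.mem_filter.mp hj).2
    have hsumcard : (∑ i, (R i).card) ≤ setWeight w S := by
      rw [← setWeight_rowSet R]
      exact setWeight_mono w hrowsub
    have hcardlb : ∀ i, t - 1 ≤ (R i).card := by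
      intro i
      have hsplit : ((Finset.univ : Finset (Fin t)).filter (fun j => Vvx i j ∈ S)).card
          + ((Finset.univ : Finset (Fin t)).filter (fun j => ¬ Vvx i j ∈ S)).card = t := by
        rw [Finset.card_filter_add_card_filter_not]
        simp
      have hle1 : ((Finset.univ : Finset (Fin t)).filter (fun j => ¬ Vvx i j ∈ S)).card ≤ 1 := by
        apply Finset.card_le_one.mpr
        intro x hx y hy
        simp only [Finset.mem_filter] at hx hy
        exact hTss i x y hx.2 hy.2
      have hRi : R i = Finset.univ.filter (fun j => Vvx i j ∈ S) := rfl
      rw [hRi]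
      omega
    have hne1 : ∀ i, ∃ j, Vvx i j ∉ S := by
      intro i
      by_contra hcon
      push_neg at hcon
      have hRi : (R i).card = t := by
        rw [hR]
        simp only
        rw [Finset.filter_true_of_mem (fun j _ => hcon j)]
        simp
      have hlt : n * (t - 1) < ∑ i', (R i').card := by
        have h' : ∑ _i' : Fin n, (t - 1) < ∑ i', (R i').card :=
          Finset.sum_lt_sum (fun i' _ => hcardlb i')
            ⟨i, Finset.mem_univ _, by rw [hRi]; omega⟩
        rwa [Finset.sum_const, Finset.card_univ, Fintype.card_fin, smul_eq_mul] at h'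
      have hmc : n * (t - 1) = (t - 1) * n := Nat.mul_comm _ _
      omega
    choose f hfS using hne1
    have hwSlb : (t - 1) * n ≤ setWeight w S := by
      have h' : ∑ _i : Fin n, (t - 1) ≤ ∑ i, (R i).card :=
        Finset.sum_le_sum (fun i _ => hcardlb i)
      rw [Finset.sum_const, Finset.card_univ, Fintype.card_fin, smul_eq_mul] at h'
      have hmc : n * (t - 1) = (t - 1) * n := Nat.mul_comm _ _
      omega
    have hcm3B : compMax G w S ≤ 3 * B := by omega
    -- Step F : bins small
    have hbin : ∀ j, ∑ i ∈ Finset.univ.filter (fun i => f i = j), a i ≤ B := by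
      intro j
      have hsubC : setWeight w (Cset f j) ≤ compMax G w S := by
        apply weight_le_compMax G w (show Wv j ∈ Sᶜ from hWS j)
        rintro z hz
        rcases hz with ((rfl : z = Wv j) | ⟨i, (hi : f i = j), rfl⟩) | ⟨i, (hi : f i = j), rfl⟩
        · exact ⟨hWS j, Reachable.refl _⟩
        · subst hi
          have hfc : Vvx i (f i) ∈ Sᶜ := hfS i
          have hWc : Wv (f i) ∈ Sᶜ := hWS (f i)
          exact ⟨hfc, (induce_adj' hWc hfc (adj_vw i (f i)).symm).reachable⟩
        · subst hi
          have hfc : Vvx i (f i) ∈ Sᶜ := hfS i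
          have hWc : Wv (f i) ∈ Sᶜ := hWS (f i)
          have hUc : Uv i ∈ Sᶜ := hUS i
          refine ⟨hUc, ?_⟩
          exact ((induce_adj' hWc hfc (adj_vw i (f i)).symm).reachable).trans
            ((induce_adj' hfc hUc (adj_uv i (f i)).symm).reachable)
      rw [setWeight_Cset ha f j] at hsubC
      omega
    -- Step G : bins exactly B
    refine ⟨f, ?_⟩
    have htot : ∑ j, ∑ i ∈ Finset.univ.filter (fun i => f i = j), a i = t * B := by
      rw [Finset.sum_fiberwise]
      exact hsum
    have heq := (Finset.sum_eq_sum_iff_of_le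
      (g := fun _ : Fin t => B) (fun j _ => hbin j)).mp
      (by rw [htot, Finset.sum_const, Finset.card_univ, Fintype.card_fin, smul_eq_mul])
    intro j
    exact heq j (Finset.mem_univ j)
  · -- backward direction
    rintro ⟨f, hf⟩
    set S : Set (BPVertex n t) :=
      rowSet (fun i => Finset.univ.filter (fun j => j ≠ f i)) with hS
    set w : BPVertex n t → ℕ := bpWeight n t B a with hw
    set G : SimpleGraph (BPVertex n t) := bpGraph n t with hG
    refine le_trans (wvi_le G w S) ?_
    have hwS : setWeight w S = (t - 1) * n := by
      rw [hS, hw, setWeight_rowSet]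
      have hc : ∀ i : Fin n, ((Finset.univ : Finset (Fin t)).filter (fun j => j ≠ f i)).card
          = t - 1 := by
        intro i
        rw [Finset.filter_ne', Finset.card_erase_of_mem (Finset.mem_univ _),
          Finset.card_univ, Fintype.card_fin]
      simp only [hc, Finset.sum_const, Finset.card_univ, Fintype.card_fin, smul_eq_mul]
      exact Nat.mul_comm n (t - 1)
    have hmemV : ∀ i j, Vvx i j ∈ S ↔ j ≠ f i := by
      intro i j
      rw [hS, mem_rowSet]
      constructor
      · rintro ⟨i', j', hj', hz⟩
        simp only [Vvx, BPVertex, Sum.inr.injEq, Sum.inl.injEq, Prod.mk.injEq] at hz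
        obtain ⟨rfl, rfl⟩ := hz
        exact (Finset.mem_filter.mp hj').2
      · intro hj
        exact ⟨i, j, by simp [hj], rfl⟩
    have hmemU : ∀ i, Uv i ∉ S := by
      intro i hi
      rw [hS, mem_rowSet] at hi
      obtain ⟨i', j', _, hz⟩ := hi
      simp [Uv, Vvx, BPVertex] at hz
    have hmemW : ∀ j, Wv j ∉ S := by
      intro j hj
      rw [hS, mem_rowSet] at hj
      obtain ⟨i', j', _, hz⟩ := hj
      simp [Wv, Vvx, BPVertex] at hz
    have hmemX : Xv ∉ S := by
      intro hx
      rw [hS, mem_rowSet] at hx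
      obtain ⟨i', j', _, hz⟩ := hx
      simp [Xv, Vvx, BPVertex] at hz
    have hadjlab : ∀ x y : (Sᶜ : Set (BPVertex n t)), (G.induce Sᶜ).Adj x y →
        bpLabel f ↑x = bpLabel f ↑y := by
      rintro ⟨x, hx⟩ ⟨y, hy⟩ hxy
      have hadj : (bpGraph n t).Adj x y := hxy
      rcases bp_adj_cases hadj with ⟨i, j, rfl, rfl⟩ | ⟨i, j, rfl, rfl⟩ |
        ⟨i, j, rfl, rfl⟩ | ⟨i, j, rfl, rfl⟩
      · have hj : j = f i := by
          by_contra hne'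
          exact hy ((hmemV i j).mpr hne')
        simp [bpLabel, Uv, Vvx, hj]
      · have hj : j = f i := by
          by_contra hne'
          exact hx ((hmemV i j).mpr hne')
        simp [bpLabel, Uv, Vvx, hj]
      · simp [bpLabel, Wv, Vvx]
      · simp [bpLabel, Wv, Vvx]
    have hcm : compMax G w S ≤ 3 * B := by
      apply compMax_le
      intro C
      obtain ⟨v, hv⟩ := C.exists_rep
      have hlab : ∀ u : (Sᶜ : Set (BPVertex n t)), u ∈ C.supp →
          bpLabel f ↑u = bpLabel f ↑v := by
        intro u hu
        have h1 : (G.induce Sᶜ).connectedComponentMk u = (G.induce Sᶜ).connectedComponentMk v := by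
          have h2 : (G.induce Sᶜ).connectedComponentMk u = C := hu
          have h3 : (G.induce Sᶜ).connectedComponentMk v = C := hv
          rw [h2, h3]
        exact reachable_label (fun z : (Sᶜ : Set (BPVertex n t)) => bpLabel f ↑z)
          hadjlab (SimpleGraph.ConnectedComponent.exact h1)
      rcases hLv : bpLabel f ↑v with _ | j
      · -- component of x
        have hsub : Subtype.val '' C.supp ⊆ ({Xv} : Set (BPVertex n t)) := by
          rintro z ⟨u, hu, rfl⟩
          have hl := hlab u hu
          rw [hLv] at hl
          obtain ⟨zz, hz⟩ := u
          rcases zz with i | ⟨i, j⟩ | j | uu <;> simp only [bpLabel] at hl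
          · exact absurd hl (by simp)
          · exact absurd hl (by simp)
          · exact absurd hl (by simp)
          · rfl
        have h3 : setWeight w ({Xv} : Set (BPVertex n t)) = 3 * B := by
          rw [setWeight, finsum_mem_singleton, hw]
          rfl
        have h4 := setWeight_mono (V := BPVertex n t) w hsub
        rwa [h3] at h4
      · -- component of w_j
        have hsub : Subtype.val '' C.supp ⊆ Cset f j := by
          rintro z ⟨u, hu, rfl⟩
          have hl := hlab u hu
          rw [hLv] at hl
          obtain ⟨zz, hz⟩ := u
          rcases zz with i | ⟨i, j'⟩ | j' | uu <;>
            simp only [bpLabel, Option.some.injEq] at hl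
          · exact Or.inr ⟨i, hl, rfl⟩
          · have hj' : j' = f i := by
              by_contra hne'
              exact hz ((hmemV i j').mpr hne')
            refine Or.inl (Or.inr ⟨i, show f i = j from by rw [← hj']; exact hl, ?_⟩)
            show Vvx i (f i) = Vvx i j'
            rw [← hj']
          · subst hl
            exact Or.inl (Or.inl rfl)
          · exact absurd hl (by simp)
        have hle' := setWeight_mono (V := BPVertex n t) w hsub
        rw [hw, setWeight_Cset ha f j, hf j] at hle'
        calc setWeight w (Subtype.val '' C.supp) ≤ 2 * B + B := hle'
          _ ≤ 3 * B := by omega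
    rw [viCost, hwS, hk]
    omega
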